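/- Let p, r be positive integers, and let A, Â be p × r real matrices and H an r × r real matrix such that Â^⊤Â = p I_r. Suppose ‖(1/p) A^⊤A − I_r‖_F ≤ ε and (1/√p)‖Â − A H‖_F ≤ δ with ‖H‖_F ≤ C. Then ‖H^⊤H − I_r‖_F ≤ 2Cδ(1 + ε + Cδ/2) + C²ε + δ² + 2δ√(1+ε); in particular H^⊤H → I_r when ε, δ → 0 with C bounded. -/

import Mathlib

open Matrix BigOperators

/-- Frobenius norm. -/
noncomputable def frobNorm {m n : Type*} [Fintype m] [Fintype n] (M : Matrix m n ℝ) : ℝ :=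
  Real.sqrt (∑ i, ∑ j, (M i j) ^ 2)

/-!
Rescale to `U = p^{-1/2} Â`, which has orthonormal columns, and `B = p^{-1/2} A H`, so that
`‖U - B‖ ≤ δ` and `BᵀB = Hᵀ (AᵀA/p) H`. Then
`HᵀH - I = -Hᵀ (AᵀA/p - I) H + (BᵀB - UᵀU)`, and expanding `B = U - (U - B)` gives
`‖BᵀB - UᵀU‖ ≤ 2 ‖Uᵀ (U - B)‖ + ‖U - B‖² ≤ 2δ + δ²`, using that `Uᵀ` does not increase the
Frobenius norm. This yields the sharper bound `C²ε + 2δ + δ²`.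
-/

attribute [local instance] Matrix.frobeniusSeminormedAddCommGroup Matrix.frobeniusIsBoundedSMul
  Matrix.frobeniusNormSMulClass

lemma frobNorm_eq_norm {m n : Type*} [Fintype m] [Fintype n] (M : Matrix m n ℝ) :
    frobNorm M = ‖M‖ := by
  rw [frobNorm, frobenius_norm_def, ← Real.sqrt_eq_rpow]
  congr 1
  refine Finset.sum_congr rfl fun i _ => Finset.sum_congr rfl fun j _ => ?_
  rw [Real.rpow_two, Real.norm_eq_abs, sq_abs]

namespace Matrix

variable {l m n : Type*} [Fintype l] [Fintype m] [Fintype n]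

lemma frobenius_norm_sq_eq_trace (M : Matrix m n ℝ) : ‖M‖ ^ 2 = trace (Mᵀ * M) := by
  rw [← frobNorm_eq_norm, frobNorm, Real.sq_sqrt (by positivity), trace]
  simp only [diag, mul_apply, transpose_apply, sq]
  exact Finset.sum_comm

/-- Pythagoras: `‖E‖² = ‖UᵀE‖² + ‖E - UUᵀE‖²`. -/
lemma frobenius_norm_transpose_mul_le_of_transpose_mul_self_eq_one [DecidableEq n]
    {U : Matrix m n ℝ} (hU : Uᵀ * U = 1) (E : Matrix m l ℝ) : ‖Uᵀ * E‖ ≤ ‖E‖ := by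
  have hres : (E - U * (Uᵀ * E))ᵀ * (E - U * (Uᵀ * E)) = Eᵀ * E - (Uᵀ * E)ᵀ * (Uᵀ * E) := by
    have hUU : (Uᵀ * E)ᵀ * (Uᵀ * U) * (Uᵀ * E) = (Uᵀ * E)ᵀ * (Uᵀ * E) := by
      rw [hU, Matrix.mul_one]
    simp only [transpose_sub, transpose_mul, transpose_transpose, Matrix.sub_mul,
      Matrix.mul_sub, Matrix.mul_assoc] at hUU ⊢
    rw [hUU]
    abel
  have hsq : ‖Uᵀ * E‖ ^ 2 ≤ ‖E‖ ^ 2 := by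
    have := sq_nonneg ‖E - U * (Uᵀ * E)‖
    rw [frobenius_norm_sq_eq_trace, hres, trace_sub, ← frobenius_norm_sq_eq_trace E,
      ← frobenius_norm_sq_eq_trace (Uᵀ * E)] at this
    linarith
  exact (sq_le_sq₀ (norm_nonneg _) (norm_nonneg _)).mp hsq

lemma frobenius_norm_transpose_mul_self_sub_le_of_transpose_mul_self_eq_one
    [DecidableEq n] {U : Matrix m n ℝ} (hU : Uᵀ * U = 1) (B : Matrix m n ℝ) :
    ‖Bᵀ * B - Uᵀ * U‖ ≤ 2 * ‖U - B‖ + ‖U - B‖ ^ 2 := by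
  set E := U - B
  have hB : Bᵀ * B - Uᵀ * U = -(Uᵀ * E) - (Uᵀ * E)ᵀ + Eᵀ * E := by
    simp only [E, transpose_sub, transpose_mul, transpose_transpose, Matrix.sub_mul,
      Matrix.mul_sub]
    abel
  have hUE := frobenius_norm_transpose_mul_le_of_transpose_mul_self_eq_one hU E
  calc ‖Bᵀ * B - Uᵀ * U‖ ≤ ‖Uᵀ * E‖ + ‖(Uᵀ * E)ᵀ‖ + ‖Eᵀ‖ * ‖E‖ := by
        rw [hB]
        refine (norm_add_le _ _).trans (add_le_add ?_ (frobenius_norm_mul _ _))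
        exact (norm_sub_le _ _).trans_eq (by rw [norm_neg])
    _ ≤ 2 * ‖E‖ + ‖E‖ ^ 2 := by
        rw [frobenius_norm_transpose, frobenius_norm_transpose, sq]
        linarith

lemma frobenius_norm_transpose_mul_mul_le {𝕜 : Type*} [RCLike 𝕜] (H : Matrix m n 𝕜)
    (M : Matrix m m 𝕜) :
    ‖Hᵀ * M * H‖ ≤ ‖H‖ ^ 2 * ‖M‖ :=
  calc ‖Hᵀ * M * H‖ ≤ ‖Hᵀ‖ * ‖M‖ * ‖H‖ :=
        (frobenius_norm_mul _ _).trans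
          (mul_le_mul_of_nonneg_right (frobenius_norm_mul _ _) (norm_nonneg _))
    _ = ‖H‖ ^ 2 * ‖M‖ := by rw [frobenius_norm_transpose]; ring

end Matrix

theorem stmt13 (p r : ℕ) (hp : 0 < p)
    (A Ahat : Matrix (Fin p) (Fin r) ℝ)
    (H : Matrix (Fin r) (Fin r) ℝ) (ε δ C : ℝ)
    (hhat : Ahatᵀ * Ahat = (p : ℝ) • (1 : Matrix (Fin r) (Fin r) ℝ))
    (hε : frobNorm ((1 / (p : ℝ)) • (Aᵀ * A) - 1) ≤ ε)
    (hδ : (1 / Real.sqrt p) * frobNorm (Ahat - A * H) ≤ δ)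
    (hH : frobNorm H ≤ C) :
    frobNorm (Hᵀ * H - 1) ≤
      2 * C * δ * (1 + ε + C * δ / 2) + C ^ 2 * ε + δ ^ 2 + 2 * δ * Real.sqrt (1 + ε) := by
  have hpR : (0 : ℝ) < p := by exact_mod_cast hp
  rw [frobNorm_eq_norm] at hε hδ hH ⊢
  set M := (1 / (p : ℝ)) • (Aᵀ * A) - 1
  set c := 1 / Real.sqrt p
  have hc : c * c = 1 / (p : ℝ) := by
    rw [div_mul_div_comm, one_mul, Real.mul_self_sqrt hpR.le]
  set U := c • Ahat
  set B := c • (A * H)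
  have hU : Uᵀ * U = 1 := by
    simp only [U, transpose_smul, smul_mul, Matrix.mul_smul, hhat, smul_smul]
    rw [← mul_assoc, hc, one_div_mul_cancel hpR.ne', one_smul]
  have hB : Hᵀ * H - Bᵀ * B = -(Hᵀ * M * H) := by
    simp only [B, M, transpose_smul, transpose_mul, smul_mul, Matrix.mul_smul, smul_smul, hc,
      Matrix.mul_sub, Matrix.sub_mul, Matrix.mul_one, Matrix.mul_assoc]
    abel
  have hUB : ‖U - B‖ ≤ δ := by
    rwa [← smul_sub, norm_smul, Real.norm_of_nonneg (by positivity)]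
  have hsharp : ‖Hᵀ * H - 1‖ ≤ C ^ 2 * ε + (2 * δ + δ ^ 2) :=
    calc ‖Hᵀ * H - 1‖ = ‖(Hᵀ * H - Bᵀ * B) + (Bᵀ * B - Uᵀ * U)‖ := by rw [hU]; abel_nf
      _ ≤ ‖H‖ ^ 2 * ‖M‖ + (2 * ‖U - B‖ + ‖U - B‖ ^ 2) := by
        refine norm_add_le_of_le ?_
          (frobenius_norm_transpose_mul_self_sub_le_of_transpose_mul_self_eq_one hU B)
        rw [hB, norm_neg]
        exact frobenius_norm_transpose_mul_mul_le H M
      _ ≤ C ^ 2 * ε + (2 * δ + δ ^ 2) := by gcongr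
  have hC : 0 ≤ C := (norm_nonneg _).trans hH
  have hε0 : 0 ≤ ε := (norm_nonneg _).trans hε
  have hδ0 : 0 ≤ δ := (norm_nonneg _).trans hUB
  have hsqrt : 1 ≤ Real.sqrt (1 + ε) := Real.one_le_sqrt.mpr (by linarith)
  nlinarith [mul_nonneg hC hδ0, mul_nonneg (mul_nonneg hC hδ0) hε0, sq_nonneg (C * δ)]
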